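/- Let F be a field, n a positive integer, d a nonnegative integer, and λ a partition of length at most n. Then the monomial symmetric polynomial m_λ belongs to the ideal I_{n,d} if and only if lp(λ) ≥ d+1. -/

import Mathlib

open MvPolynomial

/-- The monomial symmetric polynomial in `n` variables attached to the multiset `lam`
(the parts of the partition; zero entries are discarded). -/
noncomputable def mSym (F : Type*) [Field F] (n : ℕ) (lam : Multiset ℕ) :
    MvPolynomial (Fin n) F :=
  msymm (Fin n) F
    (⟨Multiset.filter (0 < ·) lam, fun {_} hx => (Multiset.mem_filter.mp hx).2, rfl⟩ :
      Nat.Partition (Multiset.filter (0 < ·) lam).sum)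

/-- The monomial symmetric polynomial, as an element of the subalgebra of
symmetric polynomials. -/
noncomputable def mSymS (F : Type*) [Field F] (n : ℕ) (lam : Multiset ℕ) :
    symmetricSubalgebra (Fin n) F :=
  ⟨mSym F n lam, msymm_isSymmetric _ _ _⟩

/-- `lam` is (the multiset of parts of) a partition of length at most `n`. -/
def IsPartition (n : ℕ) (lam : Multiset ℕ) : Prop :=
  (∀ x ∈ lam, 0 < x) ∧ Multiset.card lam ≤ n

/-- The leading part `lp` of a partition. -/
def leadingPart (lam : Multiset ℕ) : ℕ := lam.sup

/-- The leading multiplicity `lm` of a partition. -/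
def leadingMult (lam : Multiset ℕ) : ℕ := lam.count lam.sup

/-- The ideal `I_{n,d}` of truncated symmetric polynomials: the intersection of
`(x_1^{d+1}, …, x_n^{d+1})` with the subring of symmetric polynomials. -/
noncomputable def truncIdeal (F : Type*) [Field F] (n d : ℕ) :
    Ideal (symmetricSubalgebra (Fin n) F) :=
  Ideal.comap (symmetricSubalgebra (Fin n) F).val
    (Ideal.span (Set.range fun i : Fin n => (X i : MvPolynomial (Fin n) F) ^ (d + 1)))

/-!
A polynomial lies in the monomial ideal `(x_1^{d+1}, …, x_n^{d+1})` iff every monomial of its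
support has some exponent `≥ d+1`. The monomials of `m_λ` are exactly the `x^α` whose nonzero
exponents form the multiset `λ`; there is at least one because `l(λ) ≤ n`, and the largest
exponent of each of them is `lp(λ)`.
-/

def exponentShape {σ : Type*} (α : σ →₀ ℕ) : Multiset ℕ := α.support.val.map α

section

variable {σ : Type*}

lemma le_sup_exponentShape_iff {k : ℕ} (hk : 0 < k) (α : σ →₀ ℕ) :
    k ≤ (exponentShape α).sup ↔ ∃ i, k ≤ α i := by
  rw [exponentShape, ← Finset.sup_def, Finset.le_sup_iff hk]
  exact ⟨fun ⟨i, _, hi⟩ => ⟨i, hi⟩,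
    fun ⟨i, hi⟩ => ⟨i, Finsupp.mem_support_iff.mpr (by omega), hi⟩⟩

lemma exists_exponentShape_eq [Fintype σ] (s : Multiset ℕ) (hs : ∀ a ∈ s, a ≠ 0)
    (hcard : Multiset.card s ≤ Fintype.card σ) : ∃ α : σ →₀ ℕ, exponentShape α = s := by
  classical
  induction s using Multiset.induction_on with
  | empty => exact ⟨0, rfl⟩
  | cons a s ih =>
    obtain ⟨α, hα⟩ := ih (fun b hb => hs b (Multiset.mem_cons_of_mem hb))
      ((Multiset.card_le_card (Multiset.le_cons_self s a)).trans hcard)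
    have hsupp : α.support.card < Fintype.card σ := by
      have := congrArg Multiset.card hα
      simp only [exponentShape, Multiset.card_map, Finset.card_val] at this
      simp only [Multiset.card_cons] at hcard
      omega
    obtain ⟨i, -, hi⟩ := Finset.exists_mem_notMem_of_card_lt_card
      (hsupp.trans_eq Finset.card_univ.symm)
    refine ⟨α.update i a, ?_⟩
    have hrest : α.support.val.map (α.update i a) = α.support.val.map α :=
      Multiset.map_congr rfl fun j hj => by
        rw [Finsupp.coe_update, Function.update_of_ne (ne_of_mem_of_not_mem hj hi)]
    rw [exponentShape, Finsupp.support_update_ne_zero α i (hs a (Multiset.mem_cons_self a s)),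
      Finset.insert_val_of_notMem hi, Multiset.map_cons, hrest, ← exponentShape, hα]
    simp

variable [DecidableEq σ]

lemma exponentShape_toFinsupp {n : ℕ} (s : Sym σ n) :
    exponentShape (Multiset.toFinsupp s.1) = (Nat.Partition.ofSym s).parts := by
  rw [exponentShape, Multiset.toFinsupp_support]
  exact Multiset.map_congr rfl fun i _ => Multiset.toFinsupp_apply _ i

lemma prod_map_X_eq_monomial {R : Type*} [CommSemiring R] (s : Multiset σ) :
    (s.map (X : σ → MvPolynomial σ R)).prod = monomial (Multiset.toFinsupp s) 1 := by
  rw [Finset.prod_multiset_map_count, ← prod_X_pow_eq_monomial, Multiset.toFinsupp_support]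
  simp only [Multiset.toFinsupp_apply]

variable [Fintype σ] {R : Type*} [CommSemiring R]

lemma coeff_msymm {n : ℕ} (μ : n.Partition) (α : σ →₀ ℕ) :
    coeff α (msymm σ R μ) = if exponentShape α = μ.parts then 1 else 0 := by
  simp only [msymm, coeff_sum, prod_map_X_eq_monomial, coeff_monomial]
  split_ifs with h
  · have hcard : Multiset.card (Finsupp.toMultiset α) = n := by
      rw [Finsupp.card_toMultiset, ← μ.parts_sum, ← h]
      rfl
    have hshape : Nat.Partition.ofSym (Sym.mk _ hcard) = μ := by
      ext1
      rw [← exponentShape_toFinsupp, Sym.mk, Finsupp.toMultiset_toFinsupp, h]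
    rw [Fintype.sum_eq_single ⟨_, hshape⟩]
    · simp
    · intro s hs
      refine if_neg fun hα => hs (Subtype.ext (Sym.coe_injective ?_))
      rw [Sym.coe_mk, ← hα]
      exact (Multiset.toFinsupp_toMultiset _).symm
  · refine Finset.sum_eq_zero fun s _ => if_neg fun hα => h ?_
    rw [← hα, exponentShape_toFinsupp, s.2]

lemma mem_support_msymm [Nontrivial R] {n : ℕ} (μ : n.Partition) (α : σ →₀ ℕ) :
    α ∈ (msymm σ R μ).support ↔ exponentShape α = μ.parts := by
  rw [mem_support_iff, coeff_msymm]
  split_ifs with h <;> simp [h]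

end

lemma mem_span_X_pow_iff {σ R : Type*} [CommSemiring R] (k : ℕ) (p : MvPolynomial σ R) :
    p ∈ Ideal.span (Set.range fun i => (X i : MvPolynomial σ R) ^ k) ↔
      ∀ α ∈ p.support, ∃ i, k ≤ α i := by
  have hgens : (Set.range fun i => (X i : MvPolynomial σ R) ^ k) =
      (fun s => monomial s (1 : R)) '' Set.range fun i => Finsupp.single i k := by
    rw [← Set.range_comp]
    exact congrArg Set.range (funext fun i => X_pow_eq_monomial)
  simp only [hgens, mem_ideal_span_monomial_image, Set.exists_range_iff, Finsupp.single_le_iff]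

theorem mSymS_mem_truncIdeal_iff_general (F : Type*) [Field F] (n : ℕ) (d : ℕ)
    (lam : Multiset ℕ) (hlam : IsPartition n lam) :
    mSymS F n lam ∈ truncIdeal F n d ↔ d + 1 ≤ leadingPart lam := by
  have hparts : lam.filter (0 < ·) = lam := Multiset.filter_eq_self.mpr hlam.1
  have hsupp (α : Fin n →₀ ℕ) : α ∈ (mSym F n lam).support ↔ exponentShape α = lam := by
    rw [mSym, mem_support_msymm]
    exact Eq.congr_right hparts
  obtain ⟨α₀, hα₀⟩ := exists_exponentShape_eq lam (fun a ha => (hlam.1 a ha).ne')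
    (hlam.2.trans_eq (Fintype.card_fin n).symm)
  change mSym F n lam ∈ Ideal.span _ ↔ _
  simp only [mem_span_X_pow_iff, hsupp, leadingPart]
  refine ⟨fun h => ?_, fun h α hα => ?_⟩
  · rw [← hα₀]
    exact (le_sup_exponentShape_iff d.succ_pos α₀).2 (h α₀ hα₀)
  · rw [← hα] at h
    exact (le_sup_exponentShape_iff d.succ_pos α).1 h

/-- `m_λ ∈ I_{n,d}` if and only if `lp(λ) ≥ d+1`. -/
theorem mSymS_mem_truncIdeal_iff (F : Type*) [Field F] (n : ℕ) (hn : 0 < n) (d : ℕ)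
    (lam : Multiset ℕ) (hlam : IsPartition n lam) :
    mSymS F n lam ∈ truncIdeal F n d ↔ d + 1 ≤ leadingPart lam :=
  mSymS_mem_truncIdeal_iff_general F n d lam hlam
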